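/- Let μ be the (unique) stationary distribution of the MDP with Bernoulli treatments, let P* be the fixed point of the mean-field dynamical system, and let Y* ∈ {0,1}^n have independent coordinates with Y*_i ~ Bernoulli(P*_i). Then W_{L1}(μ, law(Y*)) ≤ n·√(L_n)·√C / (2(1−C)). -/

import Mathlib

open Finset Filter Topology

noncomputable section

namespace MRT

/-- The state space: binary outcomes for each of the `n` units. -/
abbrev State (n : ℕ) := Fin n → Bool

variable {n : ℕ}

/-- `zc Nbr y i` is `Z_i(y) = ∑_{j ∈ 𝒩_i} y_j`, the number of active neighbors of `i`. -/
def zc (Nbr : Fin n → Finset (Fin n)) (y : State n) (i : Fin n) : ℝ :=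
  ∑ j ∈ Nbr i, (if y j then (1 : ℝ) else 0)

/-- Probability that coordinate `i` is `1` at the next step, starting from state `y`,
under Bernoulli(π i) treatments. -/
def succProb (Nbr : Fin n → Finset (Fin n)) (f : Fin n → Bool → Bool → ℝ → ℝ)
    (π : Fin n → ℝ) (y : State n) (i : Fin n) : ℝ :=
  π i * f i (y i) true (zc Nbr y i) + (1 - π i) * f i (y i) false (zc Nbr y i)

/-- Transition kernel `P(π)` of the MDP with Bernoulli treatments. -/
def kernel (Nbr : Fin n → Finset (Fin n)) (f : Fin n → Bool → Bool → ℝ → ℝ)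
    (π : Fin n → ℝ) (y y' : State n) : ℝ :=
  ∏ i, if y' i then succProb Nbr f π y i else 1 - succProb Nbr f π y i

/-- One-step pushforward `ν P(π)` of a distribution `ν` under the kernel. -/
def step (Nbr : Fin n → Finset (Fin n)) (f : Fin n → Bool → Bool → ℝ → ℝ)
    (π : Fin n → ℝ) (ν : State n → ℝ) : State n → ℝ :=
  fun y' => ∑ y, ν y * kernel Nbr f π y y'

/-- `ν` is a probability distribution on `{0,1}^n`. -/
def IsDist (ν : State n → ℝ) : Prop := (∀ y, 0 ≤ ν y) ∧ ∑ y, ν y = 1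

/-- `μ` is a stationary probability distribution for the kernel. -/
def IsStationary (Nbr : Fin n → Finset (Fin n)) (f : Fin n → Bool → Bool → ℝ → ℝ)
    (π : Fin n → ℝ) (μ : State n → ℝ) : Prop :=
  IsDist μ ∧ step Nbr f π μ = μ

/-- Expectation of `g` under the (finitely supported) distribution `ν`. -/
def expect (ν : State n → ℝ) (g : State n → ℝ) : ℝ := ∑ y, ν y * g y

/-- `γ` is a coupling of `ν₁` and `ν₂`. -/
def IsCoupling (γ : State n × State n → ℝ) (ν₁ ν₂ : State n → ℝ) : Prop :=
  (∀ p, 0 ≤ γ p) ∧ (∀ x, ∑ y, γ (x, y) = ν₁ x) ∧ (∀ y, ∑ x, γ (x, y) = ν₂ y)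

/-- `∑ i |x_i - y_i|` for binary vectors. -/
def hamming (x y : State n) : ℝ := ∑ i : Fin n, (if x i = y i then (0:ℝ) else 1)

/-- The `L1`-Wasserstein distance between two distributions on `{0,1}^n`. -/
def WL1 (ν₁ ν₂ : State n → ℝ) : ℝ :=
  sInf {c | ∃ γ, IsCoupling γ ν₁ ν₂ ∧ c = ∑ p : State n × State n, γ p * hamming p.1 p.2}

/-- `∑_{j ∈ 𝒩_i} |x_j - y_j|` for binary vectors. -/
def nbrDiff (Nbr : Fin n → Finset (Fin n)) (i : Fin n) (x y : State n) : ℝ :=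
  ∑ j ∈ Nbr i, (if x j = y j then (0:ℝ) else 1)

/-- The graph-dependent Wasserstein distance `W_{d_{E,k}}`. -/
def WdE (Nbr : Fin n → Finset (Fin n)) (k : ℕ) (ν₁ ν₂ : State n → ℝ) : ℝ :=
  sInf {c | ∃ γ, IsCoupling γ ν₁ ν₂ ∧
    c = ⨆ i : Fin n,
      (∑ p : State n × State n, γ p * (nbrDiff Nbr i p.1 p.2) ^ k) ^ ((k : ℝ)⁻¹)}

/-- Multilinear extension of `f i` to probabilities `p, w ∈ [0,1]`:
`f_i(p,w,z) = a_i(z) + b_i(z) w + c_i(z) p + d_i(z) w p`. -/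
def fext (f : Fin n → Bool → Bool → ℝ → ℝ) (i : Fin n) (p w z : ℝ) : ℝ :=
  f i false false z + (f i false true z - f i false false z) * w +
    (f i true false z - f i false false z) * p +
    (f i true true z - f i false true z - f i true false z + f i false false z) * w * p

/-- `Q_i = ∑_{j ∈ 𝒩_i} P_j`. -/
def mfQ (Nbr : Fin n → Finset (Fin n)) (P : Fin n → ℝ) (i : Fin n) : ℝ := ∑ j ∈ Nbr i, P j

/-- One step of the mean-field dynamical system. -/
def mfStep (Nbr : Fin n → Finset (Fin n)) (f : Fin n → Bool → Bool → ℝ → ℝ)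
    (π : Fin n → ℝ) (P : Fin n → ℝ) : Fin n → ℝ :=
  fun i => fext f i (P i) (π i) (mfQ Nbr P i)

/-- `P` is a fixed point of the mean-field dynamical system, lying in `[0,1]^n`. -/
def IsMFFixed (Nbr : Fin n → Finset (Fin n)) (f : Fin n → Bool → Bool → ℝ → ℝ)
    (π : Fin n → ℝ) (P : Fin n → ℝ) : Prop :=
  (∀ i, P i ∈ Set.Icc (0:ℝ) 1) ∧ mfStep Nbr f π P = P

/-- Law of a vector of independent Bernoulli(P i) coordinates. -/
def prodLaw (P : Fin n → ℝ) (y : State n) : ℝ := ∏ i, if y i then P i else 1 - P i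

/-- Probability of the treatment vector `w` under independent Bernoulli(π i). -/
def wProb (π : Fin n → ℝ) (w : State n) : ℝ := ∏ i, if w i then π i else 1 - π i

/-- Conditional probability of the next state `y'` given state `y` and treatments `w`. -/
def condProb (Nbr : Fin n → Finset (Fin n)) (f : Fin n → Bool → Bool → ℝ → ℝ)
    (y w y' : State n) : ℝ :=
  ∏ i, if y' i then f i (y i) (w i) (zc Nbr y i) else 1 - f i (y i) (w i) (zc Nbr y i)

/-- Probability of the trajectory `(Y_1, …, Y_{T+1}; W_1, …, W_T)` (indexed from `0` in Lean)
of the MDP with Bernoulli treatments, with initial distribution `ν₀`. -/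
def trajProb (Nbr : Fin n → Finset (Fin n)) (f : Fin n → Bool → Bool → ℝ → ℝ)
    (π : Fin n → ℝ) (T : ℕ) (ν₀ : State n → ℝ)
    (Y : Fin (T + 1) → State n) (W : Fin T → State n) : ℝ :=
  ν₀ (Y 0) * ∏ t : Fin T, wProb π (W t) * condProb Nbr f (Y t.castSucc) (W t) (Y t.succ)

/-- The estimator `f̂_i(y,w)` computed from the trajectory (convention `0/0 = 0`,
which is Lean's division). -/
def fhat {T : ℕ} (Y : Fin (T + 1) → State n) (W : Fin T → State n)
    (i : Fin n) (y w : Bool) : ℝ :=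
  (∑ t : Fin T, if Y t.castSucc i = y ∧ W t i = w then (if Y t.succ i then (1:ℝ) else 0) else 0) /
  (∑ t : Fin T, if Y t.castSucc i = y ∧ W t i = w then (1:ℝ) else 0)

/-- The undirected-graph structure: symmetric neighborhoods without self-loops. -/
def GoodGraph (Nbr : Fin n → Finset (Fin n)) : Prop :=
  (∀ i j, i ∈ Nbr j ↔ j ∈ Nbr i) ∧ ∀ i, i ∉ Nbr i

/-- `f` takes values strictly between 0 and 1. -/
def PosF (f : Fin n → Bool → Bool → ℝ → ℝ) : Prop :=
  ∀ i y w z, 0 ≤ z → f i y w z ∈ Set.Ioo (0:ℝ) 1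

/-- The regularity assumptions: `L`-Lipschitzness in the third argument, the bound `B` on
the effect of the first argument, maximal degree `D`, and the contraction condition
`B + L·D ≤ C < 1`. -/
def Regular (Nbr : Fin n → Finset (Fin n)) (f : Fin n → Bool → Bool → ℝ → ℝ)
    (L B : ℝ) (D : ℕ) (C : ℝ) : Prop :=
  0 ≤ L ∧
  (∀ i y w z₁ z₂, 0 ≤ z₁ → 0 ≤ z₂ → |f i y w z₁ - f i y w z₂| ≤ L * |z₁ - z₂|) ∧
  (∀ i w z, 0 ≤ z → |f i true w z - f i false w z| ≤ B) ∧
  (∀ i, (Nbr i).card ≤ D) ∧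
  B + L * D ≤ C ∧ C < 1

/-- Adjacency matrix of the interference graph. -/
def adjMat (Nbr : Fin n → Finset (Fin n)) : Matrix (Fin n) (Fin n) ℝ :=
  Matrix.of fun i j => if j ∈ Nbr i then (1:ℝ) else 0


/-- Indicator of `Y_i = 1` as a real-valued function of the state. -/
def Yi (i : Fin n) (s : State n) : ℝ := if s i then 1 else 0

/-- `a_i(z) = f_i(0,0,z)`. -/
def aF (f : Fin n → Bool → Bool → ℝ → ℝ) (i : Fin n) (z : ℝ) : ℝ := f i false false z

/-- `b_i(z) = f_i(0,1,z) - f_i(0,0,z)`. -/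
def bF (f : Fin n → Bool → Bool → ℝ → ℝ) (i : Fin n) (z : ℝ) : ℝ :=
  f i false true z - f i false false z

/-- `c_i(z) = f_i(1,0,z) - f_i(0,0,z)`. -/
def cF (f : Fin n → Bool → Bool → ℝ → ℝ) (i : Fin n) (z : ℝ) : ℝ :=
  f i true false z - f i false false z

/-- `d_i(z) = f_i(1,1,z) - f_i(0,1,z) - f_i(1,0,z) + f_i(0,0,z)`. -/
def dF (f : Fin n → Bool → Bool → ℝ → ℝ) (i : Fin n) (z : ℝ) : ℝ :=
  f i true true z - f i false true z - f i true false z + f i false false z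

/-- `â_i` computed from the trajectory. -/
def ahat {T : ℕ} (Y : Fin (T + 1) → State n) (W : Fin T → State n) (i : Fin n) : ℝ :=
  fhat Y W i false false

/-- `b̂_i` computed from the trajectory. -/
def bhat {T : ℕ} (Y : Fin (T + 1) → State n) (W : Fin T → State n) (i : Fin n) : ℝ :=
  fhat Y W i false true - fhat Y W i false false

/-- `ĉ_i` computed from the trajectory. -/
def chat {T : ℕ} (Y : Fin (T + 1) → State n) (W : Fin T → State n) (i : Fin n) : ℝ :=
  fhat Y W i true false - fhat Y W i false false

/-- `d̂_i` computed from the trajectory. -/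
def dhat {T : ℕ} (Y : Fin (T + 1) → State n) (W : Fin T → State n) (i : Fin n) : ℝ :=
  fhat Y W i true true + fhat Y W i false false - fhat Y W i false true - fhat Y W i true false

/-- The plug-in estimator `τ̂_LDE(γ₁, γ₂)` of the long-term direct effect. -/
def ldeHat {T : ℕ} (Y : Fin (T + 1) → State n) (W : Fin T → State n) (γ₁ γ₂ : ℝ) : ℝ :=
  (1 / (n : ℝ)) * ∑ i : Fin n,
    ((ahat Y W i + bhat Y W i * γ₁) / (1 - chat Y W i - dhat Y W i * γ₁) -
      (ahat Y W i + bhat Y W i * γ₂) / (1 - chat Y W i - dhat Y W i * γ₂))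

/-- `P̂_i = (1/T) ∑_{t=1}^T Y_{it}`. -/
def Phat {T : ℕ} (Y : Fin (T + 1) → State n) (i : Fin n) : ℝ :=
  (∑ t : Fin T, if Y t.castSucc i then (1 : ℝ) else 0) / T

/-- The regression estimator `f̂'_i(y,w)_{δ_T}` of the derivative of `f_i` in its third
argument, computed from the trajectory (`Dr` is the degree bound `D_n`, `δ` is `δ_T`). -/
def fhatD (Nbr : Fin n → Finset (Fin n)) {T : ℕ}
    (Y : Fin (T + 1) → State n) (W : Fin T → State n)
    (i : Fin n) (y w : Bool) (Dr δ : ℝ) : ℝ :=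
  let ind : Fin T → ℝ := fun t => if Y t.castSucc i = y ∧ W t i = w then 1 else 0
  let cnt : ℝ := ∑ t, ind t
  let Ybar : ℝ := (∑ t, ind t * (if Y t.succ i then (1 : ℝ) else 0)) / cnt
  let Zbar : ℝ := (∑ t, ind t * zc Nbr (Y t.castSucc) i) / cnt
  (∑ t, ind t * ((if Y t.succ i then (1 : ℝ) else 0) - Ybar) * (zc Nbr (Y t.castSucc) i - Zbar)) /
    max (Dr * T * δ) (∑ t, ind t * (zc Nbr (Y t.castSucc) i - Zbar) ^ 2)

/-- The plug-in estimator `τ̂_LTE(π + Δv, π)/Δ = (1/n)·𝟙ᵀ(M_η − D̂A − Ŵ_κ)⁻¹ û`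
of the (rescaled) long-term total effect. -/
def lteHatOverDelta (Nbr : Fin n → Finset (Fin n)) (π v : Fin n → ℝ) {T : ℕ}
    (Y : Fin (T + 1) → State n) (W : Fin T → State n) (Dn : ℕ) (δ η κ : ℝ) : ℝ :=
  let Dh : Fin n → ℝ := fun i =>
    (1 - π i) * (1 - Phat Y i) * fhatD Nbr Y W i false false Dn δ +
      π i * (1 - Phat Y i) * fhatD Nbr Y W i false true Dn δ +
      Phat Y i * (1 - π i) * fhatD Nbr Y W i true false Dn δ +
      Phat Y i * π i * fhatD Nbr Y W i true true Dn δ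
  let ω : Fin n → ℝ := fun i => min (1 - κ) (chat Y W i + dhat Y W i * π i)
  let u : Fin n → ℝ := fun i => (bhat Y W i + dhat Y W i * Phat Y i) * v i
  let Mη : Matrix (Fin n) (Fin n) ℝ :=
    Matrix.diagonal fun i => max 1 (Dh i * Dn / (1 - η) + ω i)
  (1 / (n : ℝ)) *
    ∑ i : Fin n, ((Mη - Matrix.diagonal Dh * adjMat Nbr - Matrix.diagonal ω)⁻¹.mulVec u) i

end MRT


end

/-!
Start from any coupling `(X, Y)` of `μ` and `law(Y*)` and run one step: draw `X'` from `P(π)(X, ·)`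
and `Y'` with independent coordinates `Y'_i ~ Bernoulli(f_i(Y_i, π_i, Q*_i))`, coupling them
coordinatewise by the maximal coupling of two Bernoulli laws. Stationarity keeps `X' ~ μ`, and
the fixed-point equation `P* = f(P*, π, Q*)` keeps `Y' ~ law(Y*)`. The bound `B`, the Lipschitz
constant `L` and the degree bound `D` give
`E|X' - Y'| ≤ C·E|X - Y| + L·∑_i E|Z_i(Y*) - Q*_i|`, so the Wasserstein distance `W` satisfies
`W ≤ C·W + K`, i.e. `W ≤ K/(1 - C)`. Finally `Z_i(Y*) - Q*_i` is a sum of at most `D` independent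
centred Bernoulli variables, so Cauchy–Schwarz gives `E|Z_i(Y*) - Q*_i| ≤ √(D/4)`, and
`L·√(D/4) ≤ √L·√C/2` because `L·D ≤ C`.
-/

namespace MRT

variable {n : ℕ}

def bern (p : ℝ) (b : Bool) : ℝ := if b then p else 1 - p

lemma bern_nonneg {p : ℝ} (hp : p ∈ Set.Icc (0 : ℝ) 1) (b : Bool) : 0 ≤ bern p b := by
  cases b <;> simp [bern, hp.1, hp.2]

lemma sum_bern (p : ℝ) : ∑ b, bern p b = 1 := by
  simp [bern]

lemma sum_bern_mul_bern (p : ℝ) (r : Bool → ℝ) (c : Bool) :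
    ∑ b, bern p b * bern (r b) c = bern (p * r true + (1 - p) * r false) c := by
  cases c <;> simp [bern]; ring

lemma prodLaw_eq_prod_bern (P : Fin n → ℝ) (y : State n) :
    prodLaw P y = ∏ i, bern (P i) (y i) := rfl

lemma sum_state_prod (g : Fin n → Bool → ℝ) :
    ∑ y : State n, ∏ i, g i (y i) = ∏ i, ∑ b, g i b :=
  (Fintype.prod_sum g).symm

lemma sum_statePair_prod (h : Fin n → Bool → Bool → ℝ) :
    ∑ z : State n × State n, ∏ i, h i (z.1 i) (z.2 i) = ∏ i, ∑ a, ∑ b, h i a b := by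
  rw [Fintype.sum_prod_type]
  simp_rw [fun x : State n => sum_state_prod (fun i b => h i (x i) b)]
  exact sum_state_prod (fun i a => ∑ b, h i a b)

lemma isDist_prodLaw {P : Fin n → ℝ} (hP : ∀ i, P i ∈ Set.Icc (0 : ℝ) 1) :
    IsDist (prodLaw P) :=
  ⟨fun y => prod_nonneg fun i _ => bern_nonneg (hP i) (y i),
    by simp_rw [prodLaw_eq_prod_bern, sum_state_prod, sum_bern, prod_const_one]⟩

lemma expect_prodLaw_prod (P : Fin n → ℝ) (g : Fin n → Bool → ℝ) :
    expect (prodLaw P) (fun y => ∏ i, g i (y i)) = ∏ i, ∑ b, bern (P i) b * g i b := by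
  simp_rw [expect, prodLaw_eq_prod_bern, ← prod_mul_distrib]
  exact sum_state_prod (fun i b => bern (P i) b * g i b)

lemma expect_sum {ι : Type*} (ν : State n → ℝ) (s : Finset ι) (g : ι → State n → ℝ) :
    expect ν (fun y => ∑ j ∈ s, g j y) = ∑ j ∈ s, expect ν (g j) := by
  simp_rw [expect, mul_sum]
  exact sum_comm

lemma expect_prodLaw_centered_mul (P : Fin n → ℝ) (j k : Fin n) :
    expect (prodLaw P) (fun y => (Yi j y - P j) * (Yi k y - P k)) =
      if j = k then P j * (1 - P j) else 0 := by
  let g : Fin n → Bool → ℝ := fun i b =>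
    (if i = j then (if b then 1 else 0) - P j else 1) *
      (if i = k then (if b then 1 else 0) - P k else 1)
  have hprod : ∀ y : State n, (Yi j y - P j) * (Yi k y - P k) = ∏ i, g i (y i) := by
    intro y
    rw [prod_mul_distrib, prod_ite_eq', prod_ite_eq', if_pos (mem_univ _), if_pos (mem_univ _)]
    rfl
  simp_rw [hprod, expect_prodLaw_prod]
  split_ifs with hjk
  · subst hjk
    rw [prod_eq_single j (fun i _ hij => by simpa [g, hij] using sum_bern (P i)) (by simp)]
    simp [g, bern]
    ring
  · refine prod_eq_zero (mem_univ j) ?_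
    simp [g, bern, hjk]
    ring

lemma expect_prodLaw_sq_sum (P : Fin n → ℝ) (s : Finset (Fin n)) :
    expect (prodLaw P) (fun y => (∑ j ∈ s, (Yi j y - P j)) ^ 2) = ∑ j ∈ s, P j * (1 - P j) := by
  simp_rw [sq, sum_mul_sum, expect_sum, expect_prodLaw_centered_mul]
  exact sum_congr rfl fun j hj => by rw [sum_ite_eq s j, if_pos hj]

lemma expect_abs_le_sqrt {ν : State n → ℝ} (hν : IsDist ν) (g : State n → ℝ) :
    expect ν (fun y => |g y|) ≤ √(expect ν (fun y => g y ^ 2)) := by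
  refine Real.le_sqrt_of_sq_le ?_
  have hCS := sum_sq_le_sum_mul_sum_of_sq_le_mul univ (r := fun y => ν y * |g y|) (f := ν)
    (g := fun y => ν y * g y ^ 2) (fun y _ => hν.1 y)
    (fun y _ => mul_nonneg (hν.1 y) (sq_nonneg _))
    (fun y _ => le_of_eq (by rw [mul_pow, sq_abs]; ring))
  rwa [hν.2, one_mul] at hCS

lemma expect_abs_zc_sub_mfQ_le {P : Fin n → ℝ} (hP : ∀ i, P i ∈ Set.Icc (0 : ℝ) 1)
    (Nbr : Fin n → Finset (Fin n)) (i : Fin n) :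
    expect (prodLaw P) (fun y => |zc Nbr y i - mfQ Nbr P i|) ≤ √((Nbr i).card / 4) := by
  have hcentered : ∀ y, zc Nbr y i - mfQ Nbr P i = ∑ j ∈ Nbr i, (Yi j y - P j) := by
    intro y
    rw [zc, mfQ, ← sum_sub_distrib]
    rfl
  simp_rw [hcentered]
  refine (expect_abs_le_sqrt (isDist_prodLaw hP) _).trans (Real.sqrt_le_sqrt ?_)
  rw [expect_prodLaw_sq_sum]
  calc ∑ j ∈ Nbr i, P j * (1 - P j) ≤ ∑ j ∈ Nbr i, (1 / 4 : ℝ) :=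
        sum_le_sum fun j _ => by nlinarith [sq_nonneg (P j - 1 / 2)]
    _ = (Nbr i).card / 4 := by rw [sum_const, nsmul_eq_mul]; ring

def bernCoupling (p q : ℝ) : Bool → Bool → ℝ
  | true, true => min p q
  | true, false => p - min p q
  | false, true => q - min p q
  | false, false => 1 - max p q

section bernCoupling

variable {p q : ℝ}

lemma bernCoupling_nonneg (hp : p ∈ Set.Icc (0 : ℝ) 1) (hq : q ∈ Set.Icc (0 : ℝ) 1)
    (a b : Bool) : 0 ≤ bernCoupling p q a b := by
  cases a <;> cases b <;> simp only [bernCoupling, sub_nonneg]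
  · exact max_le hp.2 hq.2
  · exact min_le_right p q
  · exact min_le_left p q
  · exact le_min hp.1 hq.1

lemma sum_bernCoupling_right (a : Bool) : ∑ b, bernCoupling p q a b = bern p a := by
  have := min_add_max p q
  cases a <;> simp [bernCoupling, bern]
  linarith

lemma sum_bernCoupling_left (b : Bool) : ∑ a, bernCoupling p q a b = bern q b := by
  have := min_add_max p q
  cases b <;> simp [bernCoupling, bern]
  linarith

lemma sum_bernCoupling_mul_ne :
    ∑ a, ∑ b, bernCoupling p q a b * (if a = b then 0 else 1) = |p - q| := by
  have := min_add_max p q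
  have := max_sub_min_eq_abs' p q
  simp [bernCoupling]
  linarith

end bernCoupling

def prodCoupling (p q : Fin n → ℝ) : State n × State n → ℝ :=
  fun z => ∏ i, bernCoupling (p i) (q i) (z.1 i) (z.2 i)

lemma isCoupling_prodCoupling {p q : Fin n → ℝ} (hp : ∀ i, p i ∈ Set.Icc (0 : ℝ) 1)
    (hq : ∀ i, q i ∈ Set.Icc (0 : ℝ) 1) :
    IsCoupling (prodCoupling p q) (prodLaw p) (prodLaw q) := by
  refine ⟨fun z => prod_nonneg fun i _ => bernCoupling_nonneg (hp i) (hq i) _ _, fun x => ?_,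
    fun y => ?_⟩
  · simp only [prodCoupling]
    simp_rw [sum_state_prod (fun i b => bernCoupling (p i) (q i) (x i) b), sum_bernCoupling_right]
    rfl
  · simp only [prodCoupling]
    simp_rw [sum_state_prod (fun i a => bernCoupling (p i) (q i) a (y i)), sum_bernCoupling_left]
    rfl

lemma hamming_nonneg (x y : State n) : 0 ≤ hamming x y :=
  sum_nonneg fun j _ => by split_ifs <;> norm_num

def transportCost (γ : State n × State n → ℝ) : ℝ := ∑ z, γ z * hamming z.1 z.2

lemma transportCost_prodCoupling (p q : Fin n → ℝ) :
    transportCost (prodCoupling p q) = ∑ i, |p i - q i| := by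
  let δ : Bool → Bool → ℝ := fun a b => if a = b then 0 else 1
  have hsplit : ∀ z : State n × State n, prodCoupling p q z * hamming z.1 z.2 =
      ∑ j, ∏ i, bernCoupling (p i) (q i) (z.1 i) (z.2 i) *
        (if i = j then δ (z.1 i) (z.2 i) else 1) := by
    intro z
    rw [hamming, mul_sum]
    refine sum_congr rfl fun j _ => ?_
    rw [prod_mul_distrib, prod_ite_eq', if_pos (mem_univ _)]
    rfl
  rw [transportCost]
  simp_rw [hsplit]
  rw [sum_comm]
  refine sum_congr rfl fun j _ => ?_
  rw [sum_statePair_prod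
    (fun i a b => bernCoupling (p i) (q i) a b * (if i = j then δ a b else 1)), prod_eq_single j]
  · simpa [δ] using sum_bernCoupling_mul_ne (p := p j) (q := q j)
  · intro i _ hij
    simp only [if_neg hij, mul_one, sum_bernCoupling_right, sum_bern]
  · simp

lemma IsCoupling.sum_mul_fst {γ : State n × State n → ℝ} {ν₁ ν₂ : State n → ℝ}
    (hγ : IsCoupling γ ν₁ ν₂) (g : State n → ℝ) : ∑ w, γ w * g w.1 = expect ν₁ g := by
  simp_rw [Fintype.sum_prod_type, ← sum_mul, hγ.2.1]
  rfl

lemma IsCoupling.sum_mul_snd {γ : State n × State n → ℝ} {ν₁ ν₂ : State n → ℝ}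
    (hγ : IsCoupling γ ν₁ ν₂) (g : State n → ℝ) : ∑ w, γ w * g w.2 = expect ν₂ g := by
  simp_rw [Fintype.sum_prod_type_right, ← sum_mul, hγ.2.2]
  rfl

def mixCoupling (γ : State n × State n → ℝ) (κ : State n × State n → State n × State n → ℝ) :
    State n × State n → ℝ :=
  fun z => ∑ w, γ w * κ w z

lemma isCoupling_mixCoupling {γ : State n × State n → ℝ} {ν₁ ν₂ : State n → ℝ}
    (hγ : IsCoupling γ ν₁ ν₂) {κ : State n × State n → State n × State n → ℝ}
    {K₁ K₂ : State n → State n → ℝ} (hκ : ∀ w, IsCoupling (κ w) (K₁ w.1) (K₂ w.2)) :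
    IsCoupling (mixCoupling γ κ) (fun x' => expect ν₁ (fun x => K₁ x x'))
      (fun y' => expect ν₂ (fun y => K₂ y y')) := by
  refine ⟨fun z => sum_nonneg fun w _ => mul_nonneg (hγ.1 w) ((hκ w).1 z), fun x' => ?_,
    fun y' => ?_⟩
  · simp_rw [mixCoupling]
    rw [sum_comm]
    simp_rw [← mul_sum, (hκ _).2.1]
    exact hγ.sum_mul_fst (fun x => K₁ x x')
  · simp_rw [mixCoupling]
    rw [sum_comm]
    simp_rw [← mul_sum, (hκ _).2.2]
    exact hγ.sum_mul_snd (fun y => K₂ y y')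

lemma transportCost_mixCoupling (γ : State n × State n → ℝ)
    (κ : State n × State n → State n × State n → ℝ) :
    transportCost (mixCoupling γ κ) = ∑ w, γ w * transportCost (κ w) := by
  simp_rw [transportCost, mixCoupling, sum_mul, mul_sum, mul_assoc]
  exact sum_comm

lemma sInf_le_div_one_sub_of_forall_exists_le {S : Set ℝ} (hne : S.Nonempty) (hbdd : BddBelow S)
    {C K : ℝ} (hC : C < 1) (hstep : ∀ c ∈ S, ∃ c' ∈ S, c' ≤ C * c + K) :
    sInf S ≤ K / (1 - C) := by
  suffices sInf S ≤ C * sInf S + K by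
    rw [le_div_iff₀ (by linarith)]
    linarith
  rcases le_or_gt C 0 with hC₀ | hC₀
  · obtain ⟨c, hc⟩ := hne
    obtain ⟨c', hc', hle⟩ := hstep c hc
    nlinarith [csInf_le hbdd hc, csInf_le hbdd hc']
  · refine le_of_forall_pos_le_add fun ε hε => ?_
    obtain ⟨c, hc, hlt⟩ := Real.lt_sInf_add_pos hne (div_pos hε hC₀)
    obtain ⟨c', hc', hle⟩ := hstep c hc
    have hCc : C * c ≤ C * sInf S + ε := by
      calc C * c ≤ C * (sInf S + ε / C) := mul_le_mul_of_nonneg_left hlt.le hC₀.le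
        _ = C * sInf S + ε := by field_simp
    linarith [csInf_le hbdd hc']

lemma isCoupling_mul {ν₁ ν₂ : State n → ℝ} (h₁ : IsDist ν₁) (h₂ : IsDist ν₂) :
    IsCoupling (fun z => ν₁ z.1 * ν₂ z.2) ν₁ ν₂ :=
  ⟨fun z => mul_nonneg (h₁.1 z.1) (h₂.1 z.2), fun x => by simp only [← mul_sum, h₂.2, mul_one],
    fun y => by simp only [← sum_mul, h₁.2, one_mul]⟩

lemma WL1_le_div_one_sub {ν₁ ν₂ : State n → ℝ} (h₁ : IsDist ν₁) (h₂ : IsDist ν₂) {C K : ℝ}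
    (hC : C < 1) (hstep : ∀ γ, IsCoupling γ ν₁ ν₂ →
      ∃ γ', IsCoupling γ' ν₁ ν₂ ∧ transportCost γ' ≤ C * transportCost γ + K) :
    WL1 ν₁ ν₂ ≤ K / (1 - C) := by
  rw [WL1]
  refine sInf_le_div_one_sub_of_forall_exists_le ?_ ⟨0, ?_⟩ hC ?_
  · exact ⟨_, _, isCoupling_mul h₁ h₂, rfl⟩
  · rintro c ⟨γ, hγ, rfl⟩
    exact sum_nonneg fun z _ => mul_nonneg (hγ.1 z) (hamming_nonneg _ _)
  · rintro c ⟨γ, hγ, rfl⟩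
    obtain ⟨γ', hγ', hle⟩ := hstep γ hγ
    exact ⟨_, ⟨γ', hγ', rfl⟩, hle⟩

lemma abs_convex_comb_le {t u v M : ℝ} (ht : t ∈ Set.Icc (0 : ℝ) 1) (hu : |u| ≤ M)
    (hv : |v| ≤ M) : |t * u + (1 - t) * v| ≤ M := by
  rw [abs_le] at *
  obtain ⟨ht₀, ht₁⟩ := ht
  constructor <;> nlinarith

def treatAvg (f : Fin n → Bool → Bool → ℝ → ℝ) (π : Fin n → ℝ) (i : Fin n) (b : Bool)
    (z : ℝ) : ℝ :=
  π i * f i b true z + (1 - π i) * f i b false z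

section treatAvg

variable {f : Fin n → Bool → Bool → ℝ → ℝ} {π : Fin n → ℝ} {i : Fin n}

lemma treatAvg_mem_Icc (hf : PosF f) (hπ : π i ∈ Set.Icc (0 : ℝ) 1) {z : ℝ} (hz : 0 ≤ z)
    (b : Bool) : treatAvg f π i b z ∈ Set.Icc (0 : ℝ) 1 := by
  obtain ⟨h₀, h₁⟩ := hf i b false z hz
  obtain ⟨h₀', h₁'⟩ := hf i b true z hz
  obtain ⟨hπ₀, hπ₁⟩ := hπ
  constructor <;> simp only [treatAvg] <;> nlinarith

lemma abs_treatAvg_sub_le_of_lipschitz {L : ℝ}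
    (hLip : ∀ i y w z₁ z₂, 0 ≤ z₁ → 0 ≤ z₂ → |f i y w z₁ - f i y w z₂| ≤ L * |z₁ - z₂|)
    (hπ : π i ∈ Set.Icc (0 : ℝ) 1) {z₁ z₂ : ℝ} (hz₁ : 0 ≤ z₁) (hz₂ : 0 ≤ z₂) (b : Bool) :
    |treatAvg f π i b z₁ - treatAvg f π i b z₂| ≤ L * |z₁ - z₂| := by
  have hsplit : treatAvg f π i b z₁ - treatAvg f π i b z₂ =
      π i * (f i b true z₁ - f i b true z₂) + (1 - π i) * (f i b false z₁ - f i b false z₂) := by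
    simp only [treatAvg]
    ring
  rw [hsplit]
  exact abs_convex_comb_le hπ (hLip i b true z₁ z₂ hz₁ hz₂) (hLip i b false z₁ z₂ hz₁ hz₂)

lemma abs_treatAvg_sub_treatAvg_le {B : ℝ}
    (hB : ∀ i w z, 0 ≤ z → |f i true w z - f i false w z| ≤ B)
    (hπ : π i ∈ Set.Icc (0 : ℝ) 1) {z : ℝ} (hz : 0 ≤ z) (a b : Bool) :
    |treatAvg f π i a z - treatAvg f π i b z| ≤ B * (if a = b then 0 else 1) := by
  have hflip : |treatAvg f π i true z - treatAvg f π i false z| ≤ B := by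
    have hsplit : treatAvg f π i true z - treatAvg f π i false z =
        π i * (f i true true z - f i false true z) +
          (1 - π i) * (f i true false z - f i false false z) := by
      simp only [treatAvg]
      ring
    rw [hsplit]
    exact abs_convex_comb_le hπ (hB i true z hz) (hB i false z hz)
  cases a <;> cases b
  · simp
  · simpa [abs_sub_comm] using hflip
  · simpa using hflip
  · simp

lemma fext_eq_treatAvg (f : Fin n → Bool → Bool → ℝ → ℝ) (π : Fin n → ℝ) (i : Fin n)
    (p z : ℝ) :
    fext f i p (π i) z = p * treatAvg f π i true z + (1 - p) * treatAvg f π i false z := by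
  simp only [fext, treatAvg]
  ring

end treatAvg

def mfSuccProb (Nbr : Fin n → Finset (Fin n)) (f : Fin n → Bool → Bool → ℝ → ℝ)
    (π : Fin n → ℝ) (P : Fin n → ℝ) (y : State n) (i : Fin n) : ℝ :=
  treatAvg f π i (y i) (mfQ Nbr P i)

lemma expect_prodLaw_mfSuccProb {Nbr : Fin n → Finset (Fin n)}
    {f : Fin n → Bool → Bool → ℝ → ℝ} {π P : Fin n → ℝ} (hP : mfStep Nbr f π P = P)
    (y' : State n) :
    expect (prodLaw P) (fun y => prodLaw (mfSuccProb Nbr f π P y) y') = prodLaw P y' := by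
  simp_rw [expect, prodLaw_eq_prod_bern, mfSuccProb, ← prod_mul_distrib]
  rw [sum_state_prod (fun i b => bern (P i) b * bern (treatAvg f π i b (mfQ Nbr P i)) (y' i))]
  refine prod_congr rfl fun i _ => ?_
  rw [sum_bern_mul_bern, ← fext_eq_treatAvg]
  exact congrArg (bern · (y' i)) (congrFun hP i)

lemma sum_nbrDiff_le {Nbr : Fin n → Finset (Fin n)} (hsymm : ∀ i j, i ∈ Nbr j ↔ j ∈ Nbr i)
    {D : ℕ} (hD : ∀ i, (Nbr i).card ≤ D) (x y : State n) :
    ∑ i, nbrDiff Nbr i x y ≤ D * hamming x y := by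
  simp_rw [nbrDiff, hamming, mul_sum]
  rw [sum_comm' (t' := univ) (s' := Nbr) (fun i j => by simp [hsymm i j])]
  refine sum_le_sum fun j _ => ?_
  rw [sum_const, nsmul_eq_mul]
  exact mul_le_mul_of_nonneg_right (by exact_mod_cast hD j) (by split_ifs <;> norm_num)

lemma abs_zc_sub_zc_le (Nbr : Fin n → Finset (Fin n)) (x y : State n) (i : Fin n) :
    |zc Nbr x i - zc Nbr y i| ≤ nbrDiff Nbr i x y := by
  rw [zc, zc, ← sum_sub_distrib, nbrDiff]
  refine (abs_sum_le_sum_abs _ _).trans (sum_le_sum fun j _ => ?_)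
  cases x j <;> cases y j <;> simp

lemma zc_nonneg (Nbr : Fin n → Finset (Fin n)) (y : State n) (i : Fin n) : 0 ≤ zc Nbr y i :=
  sum_nonneg fun j _ => by split_ifs <;> norm_num

lemma mfQ_nonneg (Nbr : Fin n → Finset (Fin n)) {P : Fin n → ℝ}
    (hP : ∀ i, P i ∈ Set.Icc (0 : ℝ) 1) (i : Fin n) : 0 ≤ mfQ Nbr P i :=
  sum_nonneg fun j _ => (hP j).1

lemma sum_abs_succProb_sub_mfSuccProb_le {Nbr : Fin n → Finset (Fin n)}
    {f : Fin n → Bool → Bool → ℝ → ℝ} {π P : Fin n → ℝ} {L B C : ℝ} {D : ℕ}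
    (hsymm : ∀ i j, i ∈ Nbr j ↔ j ∈ Nbr i) (hReg : Regular Nbr f L B D C)
    (hπ : ∀ i, π i ∈ Set.Icc (0 : ℝ) 1) (hP : ∀ i, P i ∈ Set.Icc (0 : ℝ) 1) (x y : State n) :
    ∑ i, |succProb Nbr f π x i - mfSuccProb Nbr f π P y i| ≤
      C * hamming x y + L * ∑ i, |zc Nbr y i - mfQ Nbr P i| := by
  obtain ⟨hL, hLip, hB, hD, hBLD, -⟩ := hReg
  have hunit : ∀ i, |succProb Nbr f π x i - mfSuccProb Nbr f π P y i| ≤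
      B * (if x i = y i then 0 else 1) + L * nbrDiff Nbr i x y +
        L * |zc Nbr y i - mfQ Nbr P i| := by
    intro i
    have hzx := zc_nonneg Nbr x i
    have hzy := zc_nonneg Nbr y i
    calc |succProb Nbr f π x i - mfSuccProb Nbr f π P y i|
        ≤ |treatAvg f π i (x i) (zc Nbr x i) - treatAvg f π i (y i) (zc Nbr x i)| +
          |treatAvg f π i (y i) (zc Nbr x i) - treatAvg f π i (y i) (zc Nbr y i)| +
          |treatAvg f π i (y i) (zc Nbr y i) - treatAvg f π i (y i) (mfQ Nbr P i)| :=
          (abs_sub_le _ (treatAvg f π i (y i) (zc Nbr y i)) _).trans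
            (add_le_add_left (abs_sub_le _ (treatAvg f π i (y i) (zc Nbr x i)) _) _)
      _ ≤ _ := by
          gcongr
          · exact abs_treatAvg_sub_treatAvg_le hB (hπ i) hzx (x i) (y i)
          · exact (abs_treatAvg_sub_le_of_lipschitz hLip (hπ i) hzx hzy (y i)).trans
              (mul_le_mul_of_nonneg_left (abs_zc_sub_zc_le Nbr x y i) hL)
          · exact abs_treatAvg_sub_le_of_lipschitz hLip (hπ i) hzy (mfQ_nonneg Nbr hP i) (y i)
  calc ∑ i, |succProb Nbr f π x i - mfSuccProb Nbr f π P y i|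
      ≤ B * hamming x y + L * ∑ i, nbrDiff Nbr i x y + L * ∑ i, |zc Nbr y i - mfQ Nbr P i| := by
        simp_rw [hamming, mul_sum, ← sum_add_distrib]
        exact sum_le_sum fun i _ => hunit i
    _ ≤ B * hamming x y + L * (D * hamming x y) + L * ∑ i, |zc Nbr y i - mfQ Nbr P i| := by
        gcongr
        exact sum_nbrDiff_le hsymm hD x y
    _ ≤ C * hamming x y + L * ∑ i, |zc Nbr y i - mfQ Nbr P i| := by
        nlinarith [hamming_nonneg x y]

lemma exists_coupling_transportCost_le {Nbr : Fin n → Finset (Fin n)}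
    {f : Fin n → Bool → Bool → ℝ → ℝ} {π : Fin n → ℝ} {L B C : ℝ} {D : ℕ}
    (hsymm : ∀ i j, i ∈ Nbr j ↔ j ∈ Nbr i) (hf : PosF f) (hπ : ∀ i, π i ∈ Set.Icc (0 : ℝ) 1)
    (hReg : Regular Nbr f L B D C) {μ : State n → ℝ} (hμ : IsStationary Nbr f π μ)
    {P : Fin n → ℝ} (hP : IsMFFixed Nbr f π P) {γ : State n × State n → ℝ}
    (hγ : IsCoupling γ μ (prodLaw P)) :
    ∃ γ', IsCoupling γ' μ (prodLaw P) ∧ transportCost γ' ≤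
      C * transportCost γ + L * ∑ i, expect (prodLaw P) (fun y => |zc Nbr y i - mfQ Nbr P i|) := by
  have hp : ∀ x i, succProb Nbr f π x i ∈ Set.Icc (0 : ℝ) 1 := fun x i =>
    treatAvg_mem_Icc hf (hπ i) (zc_nonneg Nbr x i) (x i)
  have hq : ∀ y i, mfSuccProb Nbr f π P y i ∈ Set.Icc (0 : ℝ) 1 := fun y i =>
    treatAvg_mem_Icc hf (hπ i) (mfQ_nonneg Nbr hP.1 i) (y i)
  refine ⟨mixCoupling γ fun w => prodCoupling (succProb Nbr f π w.1) (mfSuccProb Nbr f π P w.2),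
    ?_, ?_⟩
  · have hmix := isCoupling_mixCoupling hγ (K₁ := fun x => prodLaw (succProb Nbr f π x))
      (K₂ := fun y => prodLaw (mfSuccProb Nbr f π P y))
      fun w => isCoupling_prodCoupling (hp w.1) (hq w.2)
    have hstep : (fun x' => expect μ fun x => prodLaw (succProb Nbr f π x) x') = μ := hμ.2
    rwa [funext (expect_prodLaw_mfSuccProb hP.2), hstep] at hmix
  · rw [transportCost_mixCoupling]
    simp_rw [transportCost_prodCoupling]
    calc ∑ w, γ w * ∑ i, |succProb Nbr f π w.1 i - mfSuccProb Nbr f π P w.2 i|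
        ≤ ∑ w, γ w * (C * hamming w.1 w.2 + L * ∑ i, |zc Nbr w.2 i - mfQ Nbr P i|) :=
          sum_le_sum fun w _ => mul_le_mul_of_nonneg_left
            (sum_abs_succProb_sub_mfSuccProb_le hsymm hReg hπ hP.1 w.1 w.2) (hγ.1 w)
      _ = C * transportCost γ +
            L * ∑ i, expect (prodLaw P) (fun y => |zc Nbr y i - mfQ Nbr P i|) := by
          simp_rw [← hγ.sum_mul_snd, transportCost, mul_add, sum_add_distrib, mul_sum]
          rw [sum_comm (s := univ) (t := univ)]
          congr 1 <;> exact sum_congr rfl fun _ _ => by simp only [mul_left_comm]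

lemma mul_sqrt_div_four_le {L d C : ℝ} (hL : 0 ≤ L) (hd : 0 ≤ d) (hLd : L * d ≤ C) :
    L * √(d / 4) ≤ √L * √C / 2 := by
  have hroot : √L * √(d / 4) * 2 ≤ √C := by
    refine Real.le_sqrt_of_sq_le ?_
    rw [mul_pow, mul_pow, Real.sq_sqrt hL, Real.sq_sqrt (by positivity)]
    linarith
  calc L * √(d / 4) = √L * (√L * √(d / 4)) := by rw [← mul_assoc, Real.mul_self_sqrt hL]
    _ ≤ √L * (√C / 2) := mul_le_mul_of_nonneg_left (by linarith) (Real.sqrt_nonneg L)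
    _ = √L * √C / 2 := by ring

lemma Regular.mul_card_le {Nbr : Fin n → Finset (Fin n)} {f : Fin n → Bool → Bool → ℝ → ℝ}
    {L B C : ℝ} {D : ℕ} (hReg : Regular Nbr f L B D C) (i : Fin n) :
    L * (Nbr i).card ≤ C := by
  obtain ⟨hL, -, hB, hD, hBLD, -⟩ := hReg
  have hB₀ : 0 ≤ B := (abs_nonneg _).trans (hB i false 0 le_rfl)
  have hcard : ((Nbr i).card : ℝ) ≤ D := by exact_mod_cast hD i
  nlinarith

lemma mul_sum_expect_abs_zc_sub_mfQ_le {Nbr : Fin n → Finset (Fin n)}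
    {f : Fin n → Bool → Bool → ℝ → ℝ} {L B C : ℝ} {D : ℕ} (hReg : Regular Nbr f L B D C)
    {P : Fin n → ℝ} (hP : ∀ i, P i ∈ Set.Icc (0 : ℝ) 1) :
    L * ∑ i, expect (prodLaw P) (fun y => |zc Nbr y i - mfQ Nbr P i|) ≤ n * √L * √C / 2 := by
  calc L * ∑ i, expect (prodLaw P) (fun y => |zc Nbr y i - mfQ Nbr P i|)
      ≤ ∑ i, L * √((Nbr i).card / 4) := by
        rw [mul_sum]
        exact sum_le_sum fun i _ =>
          mul_le_mul_of_nonneg_left (expect_abs_zc_sub_mfQ_le hP Nbr i) hReg.1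
    _ ≤ ∑ _i : Fin n, √L * √C / 2 :=
        sum_le_sum fun i _ => mul_sqrt_div_four_le hReg.1 (by positivity) (hReg.mul_card_le i)
    _ = n * √L * √C / 2 := by
        rw [sum_const, card_univ, Fintype.card_fin, nsmul_eq_mul]
        ring

end MRT

open MRT in
/-- mean-field approximation in `L1`-Wasserstein distance: if `μ` is the
stationary distribution and `Y*` has independent Bernoulli(P*_i) coordinates, then
`W_{L1}(μ, law(Y*)) ≤ n √L √C/(2(1−C))`. -/
theorem mean_field_WL1
    (n : ℕ) (Nbr : Fin n → Finset (Fin n)) (f : Fin n → Bool → Bool → ℝ → ℝ)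
    (π : Fin n → ℝ) (L B C : ℝ) (D : ℕ)
    (hG : GoodGraph Nbr)
    (hf : PosF f)
    (hπ : ∀ i, π i ∈ Set.Ioo (0 : ℝ) 1)
    (hReg : Regular Nbr f L B D C)
    (μ : State n → ℝ) (hμ : IsStationary Nbr f π μ)
    (P : Fin n → ℝ) (hP : IsMFFixed Nbr f π P) :
    WL1 μ (prodLaw P) ≤ n * Real.sqrt L * Real.sqrt C / (2 * (1 - C)) := by
  have hπ' : ∀ i, π i ∈ Set.Icc (0 : ℝ) 1 := fun i => Set.Ioo_subset_Icc_self (hπ i)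
  have hC : C < 1 := hReg.2.2.2.2.2
  calc WL1 μ (prodLaw P)
      ≤ (L * ∑ i, expect (prodLaw P) (fun y => |zc Nbr y i - mfQ Nbr P i|)) / (1 - C) :=
        WL1_le_div_one_sub hμ.1 (isDist_prodLaw hP.1) hC fun _ hγ =>
          exists_coupling_transportCost_le hG.1 hf hπ' hReg hμ hP hγ
    _ ≤ n * √L * √C / 2 / (1 - C) :=
        div_le_div_of_nonneg_right (mul_sum_expect_abs_zc_sub_mfQ_le hReg hP.1) (by linarith)
    _ = n * Real.sqrt L * Real.sqrt C / (2 * (1 - C)) := div_div _ _ _
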